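/- Let φ be a symmetric bilinear form on E and let (e_1,…,e_n) be an orthonormal basis of E consisting of eigenvectors of φ, with φ(e_i,e_j) = ε_i δ_{ij}. Then 2 Σ_{i,j,k} Ric(e_i,e_j) φ(e_i,e_k) φ(e_j,e_k) + 2 Q̊(φ) = Σ_{i≠j} R(e_i,e_j,e_i,e_j) (ε_i − ε_j)². -/
import Mathlib


open scoped RealInnerProductSpace

/-- If `φ` is a symmetric bilinear form on `E` diagonalized by an
orthonormal basis `e` with eigenvalues `ε`, then
`2 Σ_{i,j,k} Ric(e_i,e_j) φ(e_i,e_k) φ(e_j,e_k) + 2 Q̊(φ)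
  = Σ_{i≠j} R(e_i,e_j,e_i,e_j) (ε_i − ε_j)²`,
where `Ric(X,Y) = Σ_m R(e_m,X,e_m,Y)` and
`Q̊(φ) = Σ_{i,j,k,l} R(e_i,e_k,e_l,e_j) φ(e_k,e_l) φ(e_i,e_j)`. -/
theorem stmt_0
    {E : Type*} [NormedAddCommGroup E] [InnerProductSpace ℝ E]
    {n : ℕ} (hn : 2 ≤ n) (e : OrthonormalBasis (Fin n) ℝ E)
    (R : E →ₗ[ℝ] E →ₗ[ℝ] E →ₗ[ℝ] E →ₗ[ℝ] ℝ)
    (hR1 : ∀ X Y Z W : E, R X Y Z W = - R Y X Z W)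
    (hR2 : ∀ X Y Z W : E, R X Y Z W = - R X Y W Z)
    (hR3 : ∀ X Y Z W : E, R X Y Z W = R Z W X Y)
    (hR4 : ∀ X Y Z W : E, R X Y Z W + R Y Z X W + R Z X Y W = 0)
    (φ : E →ₗ[ℝ] E →ₗ[ℝ] ℝ)
    (hφsymm : ∀ X Y : E, φ X Y = φ Y X)
    (ε : Fin n → ℝ)
    (hdiag : ∀ i j : Fin n, φ (e i) (e j) = if i = j then ε i else 0) :
    2 * (∑ i, ∑ j, ∑ k, (∑ m, R (e m) (e i) (e m) (e j)) * φ (e i) (e k) * φ (e j) (e k))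
      + 2 * (∑ i, ∑ j, ∑ k, ∑ l, R (e i) (e k) (e l) (e j) * φ (e k) (e l) * φ (e i) (e j))
      = ∑ i, ∑ j, if i = j then 0 else R (e i) (e j) (e i) (e j) * (ε i - ε j) ^ 2 := by
  set A : Fin n → Fin n → ℝ := fun i j => R (e i) (e j) (e i) (e j) with hA
  have hA0 : ∀ i, A i i = 0 := by
    intro i
    have := hR1 (e i) (e i) (e i) (e i)
    simp only [hA]; linarith
  have hAsymm : ∀ i j, A i j = A j i := by
    intro i j
    have h1 := hR1 (e j) (e i) (e j) (e i)
    have h2 := hR2 (e i) (e j) (e j) (e i)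
    simp only [hA]; linarith
  -- First sum
  have h1 : (∑ i, ∑ j, ∑ k, (∑ m, R (e m) (e i) (e m) (e j)) * φ (e i) (e k) * φ (e j) (e k))
      = ∑ i, ∑ m, A m i * ε i ^ 2 := by
    simp only [hdiag, mul_ite, ite_mul, mul_zero, zero_mul, Finset.sum_ite_eq,
      Finset.mem_univ, if_true]
    refine Finset.sum_congr rfl fun i _ => ?_
    rw [Finset.sum_mul, Finset.sum_mul]
    exact Finset.sum_congr rfl fun m _ => by simp only [hA]; ring
  -- Second sum
  have h2 : (∑ i, ∑ j, ∑ k, ∑ l, R (e i) (e k) (e l) (e j) * φ (e k) (e l) * φ (e i) (e j))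
      = -∑ i, ∑ k, A i k * (ε i * ε k) := by
    have hl : ∀ i j k : Fin n,
        (∑ l, R (e i) (e k) (e l) (e j) * φ (e k) (e l) * φ (e i) (e j))
        = R (e i) (e k) (e k) (e j) * ε k * φ (e i) (e j) := by
      intro i j k
      rw [Finset.sum_eq_single k]
      · rw [hdiag k k, if_pos rfl]
      · intro l _ hlk
        rw [hdiag k l, if_neg (fun h => hlk h.symm), mul_zero, zero_mul]
      · intro h; exact absurd (Finset.mem_univ k) h
    have hj : ∀ i : Fin n,
        (∑ j, ∑ k, R (e i) (e k) (e k) (e j) * ε k * φ (e i) (e j))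
        = ∑ k, R (e i) (e k) (e k) (e i) * ε k * ε i := by
      intro i
      rw [Finset.sum_eq_single i]
      · exact Finset.sum_congr rfl fun k _ => by rw [hdiag i i, if_pos rfl]
      · intro j _ hji
        refine Finset.sum_eq_zero fun k _ => ?_
        rw [hdiag i j, if_neg (fun h => hji h.symm), mul_zero]
      · intro h; exact absurd (Finset.mem_univ i) h
    calc (∑ i, ∑ j, ∑ k, ∑ l, R (e i) (e k) (e l) (e j) * φ (e k) (e l) * φ (e i) (e j))
        = ∑ i, ∑ j, ∑ k, R (e i) (e k) (e k) (e j) * ε k * φ (e i) (e j) := by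
          exact Finset.sum_congr rfl fun i _ => Finset.sum_congr rfl fun j _ =>
            Finset.sum_congr rfl fun k _ => hl i j k
      _ = ∑ i, ∑ k, R (e i) (e k) (e k) (e i) * ε k * ε i :=
          Finset.sum_congr rfl fun i _ => hj i
      _ = -∑ i, ∑ k, A i k * (ε i * ε k) := by
          rw [← Finset.sum_neg_distrib]
          refine Finset.sum_congr rfl fun i _ => ?_
          rw [← Finset.sum_neg_distrib]
          refine Finset.sum_congr rfl fun k _ => ?_
          have := hR2 (e i) (e k) (e k) (e i)
          simp only [hA]
          rw [this]; ring
  -- RHS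
  have h3 : (∑ i, ∑ j, if i = j then (0:ℝ) else R (e i) (e j) (e i) (e j) * (ε i - ε j) ^ 2)
      = ∑ i, ∑ j, A i j * (ε i - ε j) ^ 2 := by
    refine Finset.sum_congr rfl fun i _ => Finset.sum_congr rfl fun j _ => ?_
    by_cases h : i = j
    · subst h; simp [hA0 i]
    · simp [h, hA]
  have hswap : ∑ i, ∑ j, A i j * ε i ^ 2 = ∑ i, ∑ j, A i j * ε j ^ 2 := by
    rw [Finset.sum_comm]
    exact Finset.sum_congr rfl fun i _ => Finset.sum_congr rfl fun j _ => by
      rw [hAsymm j i]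
  have hcomm : ∑ i, ∑ m, A m i * ε i ^ 2 = ∑ i, ∑ j, A i j * ε j ^ 2 := Finset.sum_comm
  have hexp : ∑ i, ∑ j, A i j * (ε i - ε j) ^ 2
      = (∑ i, ∑ j, A i j * ε i ^ 2) + (∑ i, ∑ j, A i j * ε j ^ 2)
        - 2 * ∑ i, ∑ j, A i j * (ε i * ε j) := by
    rw [Finset.mul_sum, ← Finset.sum_add_distrib, ← Finset.sum_sub_distrib]
    refine Finset.sum_congr rfl fun i _ => ?_
    rw [Finset.mul_sum, ← Finset.sum_add_distrib, ← Finset.sum_sub_distrib]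
    exact Finset.sum_congr rfl fun j _ => by ring
  rw [h1, h2, h3, hexp, ← hswap, hcomm, hswap]
  ring
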